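/- arXiv:2506.03727 — 3 statements merged into one kernel-verified Lean document; each statement's English description precedes it below -/
import Mathlib

section
/- The functions W_k defined by W_k(z) := α^k ∫_{D_k(z)} (t_1 ⋯ t_k)^{-α-1} dt on z ∈ (k-1, k) satisfy the recursion W_k(z) = α ∫_{z-(k-1)}^1 W_{k-1}(z - t) t^{-α-1} dt for z ∈ (k-1, k) and k ≥ 1, where W_0 ≡ 1. -/
open MeasureTheory Real

/-- The simplex `D_k(z) = {t ∈ ℝ^k : max_j t_j < 1, t_1 + ⋯ + t_k > z}`. -/
def Dset (k : ℕ) (z : ℝ) : Set (Fin k → ℝ) :=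
  {t | (∀ j, t j < 1) ∧ z < ∑ j, t j}

/-- `W_k(z) = α^k ∫_{D_k(z)} (t_1 ⋯ t_k)^{-α-1} dt`, with `W_0 ≡ 1`. -/
noncomputable def W (α : ℝ) : ℕ → ℝ → ℝ
  | 0, _ => 1
  | (k + 1), z => α ^ (k + 1) * ∫ t in Dset (k + 1) z, (∏ j, t j) ^ (-α - 1)

/-!
Peel off the first coordinate `t₁ = t`: the rest of the point lies in `D_{k-1}(z - t)`, and the
integrand factors as `t^{-α-1} (t₂ ⋯ t_k)^{-α-1}`, so Fubini gives the recursion. Each point of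
`D_k(z)` has all coordinates in `(z - (k - 1), 1)`, which is why `t` ranges over that interval and
why the integrand is bounded on `D_k(z)` when `z > k - 1`.
-/

theorem integral_fin_cons {E : Type*} [NormedAddCommGroup E] [NormedSpace ℝ E] {m : ℕ}
    {g : (Fin (m + 1) → ℝ) → E} (hg : Integrable g) :
    ∫ x, g x = ∫ t, ∫ s, g (Fin.cons t s) := by
  have hmp := (volume_preserving_piFinSuccAbove (fun _ : Fin (m + 1) => ℝ) 0).symm
  have hcons : ∀ q : ℝ × (Fin m → ℝ),
      (MeasurableEquiv.piFinSuccAbove (fun _ => ℝ) 0).symm q = Fin.cons q.1 q.2 := fun q => by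
    simp [MeasurableEquiv.piFinSuccAbove, Fin.insertNthEquiv]
  rw [← hmp.integral_comp', Measure.volume_eq_prod, integral_prod]
  · simp only [hcons]
  · exact hmp.integrable_comp_emb (MeasurableEquiv.measurableEmbedding _) |>.mpr hg

namespace Dset

theorem measurableSet (k : ℕ) (z : ℝ) : MeasurableSet (Dset k z) := by
  have hbox : MeasurableSet {t : Fin k → ℝ | ∀ j, t j < 1} := by
    rw [Set.ofPred_forall]
    exact .iInter fun j => measurableSet_lt (measurable_pi_apply j) measurable_const
  exact hbox.inter <|
    measurableSet_lt measurable_const (Finset.measurable_sum _ fun j _ => measurable_pi_apply j)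

theorem lt_apply {k : ℕ} {z : ℝ} {t : Fin k → ℝ} (ht : t ∈ Dset k z) (j : Fin k) :
    z - ((k : ℝ) - 1) < t j := by
  obtain ⟨hlt, hsum⟩ := ht
  have hrest : ∑ i ∈ Finset.univ.erase j, t i ≤ (k : ℝ) - 1 := by
    calc ∑ i ∈ Finset.univ.erase j, t i ≤ ∑ _i ∈ Finset.univ.erase j, (1 : ℝ) :=
          Finset.sum_le_sum fun i _ => (hlt i).le
      _ = (k : ℝ) - 1 := by simp [Nat.cast_sub j.pos]
  linarith [Finset.add_sum_erase Finset.univ t (Finset.mem_univ j)]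

theorem eq_empty_of_le {k : ℕ} {z : ℝ} (hz : (k : ℝ) ≤ z) : Dset k z = ∅ := by
  refine Set.eq_empty_of_forall_notMem fun t ⟨hlt, hsum⟩ => ?_
  have : ∑ j, t j ≤ ∑ _j : Fin k, (1 : ℝ) := Finset.sum_le_sum fun j _ => (hlt j).le
  simp only [Finset.sum_const, Finset.card_univ, Fintype.card_fin, nsmul_one] at this
  linarith

theorem prod_pos {k : ℕ} {z : ℝ} (hz : (k : ℝ) - 1 ≤ z) {t : Fin k → ℝ} (ht : t ∈ Dset k z) :
    0 < ∏ j, t j :=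
  Finset.prod_pos fun j _ => by linarith [Dset.lt_apply ht j]

theorem cons_mem_succ {m : ℕ} {z t : ℝ} {s : Fin m → ℝ} :
    (Fin.cons t s : Fin (m + 1) → ℝ) ∈ Dset (m + 1) z ↔ t < 1 ∧ s ∈ Dset m (z - t) := by
  simp only [Dset, Set.mem_ofPred_eq, Fin.forall_fin_succ, Fin.cons_zero, Fin.cons_succ,
    Fin.sum_univ_succ, sub_lt_iff_lt_add', and_assoc]

theorem integrableOn_prod_rpow {k : ℕ} {z : ℝ} (hz : (k : ℝ) - 1 < z) (p : ℝ) :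
    IntegrableOn (fun t : Fin k → ℝ => (∏ j, t j) ^ p) (Dset k z) := by
  set c := z - ((k : ℝ) - 1)
  have hc : 0 < c := sub_pos.mpr hz
  have hsub : Dset k z ⊆ Set.Icc (fun _ => c) 1 := fun t ht =>
    ⟨fun j => (lt_apply ht j).le, fun j => (ht.1 j).le⟩
  refine ContinuousOn.integrableOn_Icc ?_ |>.mono_set hsub
  refine ContinuousOn.rpow_const (by fun_prop) fun t ht => Or.inl ?_
  exact (Finset.prod_pos fun j _ => hc.trans_le (ht.1 j)).ne'

end Dset

theorem W_eq_integral (α : ℝ) {k : ℕ} {z : ℝ} (hz : z < k) :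
    W α k z = α ^ k * ∫ t in Dset k z, (∏ j, t j) ^ (-α - 1) := by
  cases k with
  | zero =>
    have huniv : Dset 0 z = Set.univ :=
      Set.eq_univ_of_forall fun t => ⟨fun j => j.elim0, by simpa using hz⟩
    simp [W, huniv, measureReal_def, volume_pi]
  | succ k => rfl

theorem setIntegral_Dset_succ_prod_rpow {m : ℕ} {z : ℝ} (hz : (m : ℝ) < z) (p : ℝ) :
    ∫ x in Dset (m + 1) z, (∏ j, x j) ^ p =
      ∫ t in Set.Ioo (z - m) 1, t ^ p * ∫ s in Dset m (z - t), (∏ j, s j) ^ p := by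
  have hint := Dset.integrableOn_prod_rpow (k := m + 1) (by push_cast; linarith) p
  rw [← integral_indicator (Dset.measurableSet _ _), integral_fin_cons (hint.integrable_indicator
    (Dset.measurableSet _ _)), ← integral_indicator measurableSet_Ioo]
  congr 1 with t
  by_cases ht : t ∈ Set.Ioo (z - m) 1
  · have hfactor : ∀ s, (Dset (m + 1) z).indicator (fun x => (∏ j, x j) ^ p) (Fin.cons t s) =
        (Dset m (z - t)).indicator (fun s => t ^ p * (∏ j, s j) ^ p) s := fun s => by
      by_cases hs : s ∈ Dset m (z - t)
      · have hpos := Dset.prod_pos (by linarith [ht.2]) hs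
        rw [Set.indicator_of_mem (Dset.cons_mem_succ.mpr ⟨ht.2, hs⟩), Set.indicator_of_mem hs,
          Fin.prod_cons, mul_rpow (by linarith [ht.1]) hpos.le]
      · rw [Set.indicator_of_notMem (fun h => hs (Dset.cons_mem_succ.mp h).2),
          Set.indicator_of_notMem hs]
    simp only [hfactor, Set.indicator_of_mem ht, integral_indicator (Dset.measurableSet _ _),
      integral_const_mul]
  · have hzero : ∀ s, (Dset (m + 1) z).indicator (fun x => (∏ j, x j) ^ p) (Fin.cons t s) = 0 :=
      fun s => Set.indicator_of_notMem (fun h => ht ⟨by simpa using Dset.lt_apply h 0, h.1 0⟩) _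
    simp only [hzero, integral_zero, Set.indicator_of_notMem ht]

theorem stmt2_general (α : ℝ) (k : ℕ) (hk : 1 ≤ k)
    (z : ℝ) (hz : z ∈ Set.Ioo ((k : ℝ) - 1) (k : ℝ)) :
    W α k z = α * ∫ t in Set.Ioo (z - ((k : ℝ) - 1)) 1, W α (k - 1) (z - t) * t ^ (-α - 1) := by
  obtain ⟨m, rfl⟩ := Nat.exists_eq_add_of_le' hk
  simp only [Nat.cast_add, Nat.cast_one, add_sub_cancel_right, Nat.add_sub_cancel] at hz ⊢
  have hW : ∀ t ∈ Set.Ioo (z - m) 1,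
      W α m (z - t) * t ^ (-α - 1) =
        α ^ m * (t ^ (-α - 1) * ∫ s in Dset m (z - t), (∏ j, s j) ^ (-α - 1)) := fun t ht => by
    rw [W_eq_integral α (by linarith [ht.1])]
    ring
  rw [setIntegral_congr_fun measurableSet_Ioo hW, integral_const_mul,
    ← setIntegral_Dset_succ_prod_rpow hz.1, W, pow_succ]
  ring

/-- the recursion
`W_k(z) = α ∫_{z-(k-1)}^1 W_{k-1}(z - t) t^{-α-1} dt` for `z ∈ (k-1, k)`, `k ≥ 1`. -/
theorem stmt2 (α : ℝ) (hα : 0 < α) (k : ℕ) (hk : 1 ≤ k)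
    (z : ℝ) (hz : z ∈ Set.Ioo ((k : ℝ) - 1) (k : ℝ)) :
    W α k z = α * ∫ t in Set.Ioo (z - ((k : ℝ) - 1)) 1, W α (k - 1) (z - t) * t ^ (-α - 1) :=
  stmt2_general α k hk z hz
end

section
/- For α > 2 and each fixed m ≥ 2, W_m(z) = O((z - m + 1)^{-α+1}) as z ↓ m - 1; i.e., there exist constants C > 0 and δ > 0 such that W_m(z) ≤ C (z - m + 1)^{1-α} for all z ∈ (m-1, m-1+δ). -/
open MeasureTheory Real

/-!
Put `c := z - m + 1 ∈ (0, 1)`. On `Dset m z` every coordinate lies in `(c, 1)`, and the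
Weierstrass product inequality `∏ (1 - xᵢ) ≥ 1 - ∑ xᵢ` gives `t_j (c + 1 - t_j) ≤ ∏ t` for each `j`.
Multiplying these `m` bounds, `(∏ t)^(-α-1) ≤ ∏_j (t_j (c + 1 - t_j))^(-β)` with `β = (α+1)/m`.
The two factors `t_j`, `c + 1 - t_j` add up to at least `1`, so one of them is at least `1/2`, and
each term is at most `2^γ (t_j^(-γ) + (c + 1 - t_j)^(-γ))` for `γ = (α+m-1)/m ≥ β`. The resulting majorant is a product of functions of one
variable, each with integral `O(c^(1-γ))` over `(c, 1)` since `γ > 1`, and `m (1 - γ) = 1 - α`.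
-/

theorem Finset.one_sub_sum_one_sub_le_prod {ι R : Type*} [CommRing R] [LinearOrder R]
    [IsStrictOrderedRing R] (s : Finset ι) {f : ι → R}
    (h0 : ∀ i ∈ s, 0 ≤ f i) (h1 : ∀ i ∈ s, f i ≤ 1) :
    1 - ∑ i ∈ s, (1 - f i) ≤ ∏ i ∈ s, f i := by
  induction s using Finset.cons_induction with
  | empty => simp
  | cons a s _ ih =>
    rw [Finset.sum_cons, Finset.prod_cons]
    have h0a := h0 a (Finset.mem_cons_self a s)
    have h1a := h1 a (Finset.mem_cons_self a s)
    have h0s : ∀ i ∈ s, 0 ≤ f i := fun i hi => h0 i (Finset.mem_cons_of_mem hi)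
    have hs1 : ∏ i ∈ s, f i ≤ 1 :=
      Finset.prod_le_one h0s fun i hi => h1 i (Finset.mem_cons_of_mem hi)
    nlinarith [ih h0s fun i hi => h1 i (Finset.mem_cons_of_mem hi),
      mul_nonneg (sub_nonneg.2 h1a) (sub_nonneg.2 hs1)]

theorem Real.rpow_neg_mul_le_of_one_le_add {β γ a b : ℝ} (hβ : 0 ≤ β) (hβγ : β ≤ γ)
    (ha : 0 < a) (ha1 : a ≤ 1) (hb : 0 < b) (hb1 : b ≤ 1) (hab : 1 ≤ a + b) :
    (a * b) ^ (-β) ≤ 2 ^ γ * (a ^ (-γ) + b ^ (-γ)) := by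
  wlog hle : a ≤ b generalizing a b
  · rw [mul_comm, add_comm]
    exact this hb hb1 ha ha1 (by linarith) (by linarith)
  have h2pos : (0 : ℝ) < 2 := two_pos
  calc (a * b) ^ (-β) ≤ (a / 2) ^ (-β) :=
        rpow_le_rpow_of_nonpos (by positivity) (by nlinarith) (by linarith)
    _ ≤ (a / 2) ^ (-γ) := rpow_le_rpow_of_exponent_ge (by positivity) (by linarith) (by linarith)
    _ = 2 ^ γ * a ^ (-γ) := by
        rw [div_rpow ha.le h2pos.le, rpow_neg h2pos.le, div_inv_eq_mul, mul_comm]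
    _ ≤ 2 ^ γ * (a ^ (-γ) + b ^ (-γ)) := by
        gcongr
        exact le_add_of_nonneg_right (rpow_nonneg hb.le _)

noncomputable def majorant (γ c : ℝ) : ℝ → ℝ :=
  (Set.Ioo c 1).indicator fun x => 2 ^ γ * (x ^ (-γ) + (c + 1 - x) ^ (-γ))

theorem majorant_nonneg {γ c : ℝ} (hc : 0 ≤ c) : 0 ≤ majorant γ c :=
  Set.indicator_nonneg fun x hx => mul_nonneg (rpow_nonneg zero_le_two _)
    (add_nonneg (rpow_nonneg (hc.trans hx.1.le) _) (rpow_nonneg (by linarith [hx.2]) _))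

section Region

variable {ι : Type*} [Fintype ι] {t : ι → ℝ} {c : ℝ}

theorem lt_of_add_card_sub_one_lt_sum (ht : ∀ j, t j < 1)
    (hsum : c + Fintype.card ι - 1 < ∑ j, t j) (j : ι) : c < t j := by
  have hj : 1 - t j ≤ ∑ i, (1 - t i) :=
    Finset.single_le_sum (fun i _ => sub_nonneg.2 (ht i).le) (Finset.mem_univ j)
  rw [Finset.sum_sub_distrib, Finset.sum_const, Finset.card_univ, nsmul_one] at hj
  linarith

theorem mul_add_one_sub_le_prod [DecidableEq ι] (hc : 0 ≤ c) (ht : ∀ j, t j < 1)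
    (hsum : c + Fintype.card ι - 1 < ∑ j, t j) (j : ι) :
    t j * (c + 1 - t j) ≤ ∏ i, t i := by
  have hpos : ∀ i, 0 < t i := fun i => hc.trans_lt (lt_of_add_card_sub_one_lt_sum ht hsum i)
  have hrest : c + 1 - t j ≤ ∏ i ∈ Finset.univ.erase j, t i := by
    refine le_trans ?_ (Finset.one_sub_sum_one_sub_le_prod _ (fun i _ => (hpos i).le)
      fun i _ => (ht i).le)
    rw [Finset.sum_erase_eq_sub (Finset.mem_univ j), Finset.sum_sub_distrib, Finset.sum_const,
      Finset.card_univ, nsmul_one]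
    linarith
  rw [← Finset.mul_prod_erase _ _ (Finset.mem_univ j)]
  exact mul_le_mul_of_nonneg_left hrest (hpos j).le

theorem rpow_prod_le_prod_majorant {α : ℝ} (hα : -1 < α) (hcard : 2 ≤ Fintype.card ι)
    (hc : 0 ≤ c) (ht : ∀ j, t j < 1) (hsum : c + Fintype.card ι - 1 < ∑ j, t j) :
    (∏ j, t j) ^ (-α - 1) ≤
      ∏ j, majorant ((α + Fintype.card ι - 1) / Fintype.card ι) c (t j) := by
  classical
  have hn : (2 : ℝ) ≤ Fintype.card ι := by exact_mod_cast hcard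
  have hmem : ∀ j, t j ∈ Set.Ioo c 1 := fun j => ⟨lt_of_add_card_sub_one_lt_sum ht hsum j, ht j⟩
  have hpos : ∀ j, 0 < t j := fun j => hc.trans_lt (hmem j).1
  have hfac_pos : ∀ j, 0 < t j * (c + 1 - t j) := fun j =>
    mul_pos (hpos j) (by linarith [(hmem j).2])
  set β : ℝ := (α + 1) / Fintype.card ι with hβdef
  have hβ : 0 ≤ β := div_nonneg (by linarith) (by linarith)
  have hβγ : β ≤ (α + Fintype.card ι - 1) / Fintype.card ι :=
    div_le_div_of_nonneg_right (by linarith) (by linarith)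
  calc (∏ j, t j) ^ (-α - 1) = ((∏ j, t j) ^ Fintype.card ι) ^ (-β) := by
        rw [← rpow_natCast, ← rpow_mul (Finset.prod_nonneg fun j _ => (hpos j).le), hβdef]
        congr 1
        field_simp
        ring
    _ ≤ (∏ j, t j * (c + 1 - t j)) ^ (-β) := by
        refine rpow_le_rpow_of_nonpos (Finset.prod_pos fun j _ => hfac_pos j) ?_ (by linarith)
        rw [← Finset.card_univ, ← Finset.prod_const]
        exact Finset.prod_le_prod (fun j _ => (hfac_pos j).le)
          fun j _ => mul_add_one_sub_le_prod hc ht hsum j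
    _ = ∏ j, (t j * (c + 1 - t j)) ^ (-β) :=
        (finsetProd_rpow _ _ (fun j _ => (hfac_pos j).le) _).symm
    _ ≤ ∏ j, majorant ((α + Fintype.card ι - 1) / Fintype.card ι) c (t j) := by
        refine Finset.prod_le_prod (fun j _ => rpow_nonneg (hfac_pos j).le _) fun j _ => ?_
        rw [majorant, Set.indicator_of_mem (hmem j)]
        exact rpow_neg_mul_le_of_one_le_add (a := t j) (b := c + 1 - t j) hβ hβγ (hpos j)
          (hmem j).2.le (by linarith [(hmem j).2]) (by linarith [(hmem j).1]) (by linarith)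

end Region

theorem integrable_majorant {γ c : ℝ} (hc : 0 < c) : Integrable (majorant γ c) := by
  have hcont : ContinuousOn (fun x => 2 ^ γ * (x ^ (-γ) + (c + 1 - x) ^ (-γ))) (Set.Icc c 1) :=
    continuousOn_const.mul <|
      (continuousOn_id.rpow_const fun x hx => Or.inl (hc.trans_le hx.1).ne').add
        ((continuousOn_const.sub continuousOn_id).rpow_const fun x hx =>
          Or.inl (by linarith [hx.2] : (0 : ℝ) < c + 1 - x).ne')
  exact (integrable_indicator_iff measurableSet_Ioo).2 <|
    hcont.integrableOn_Icc.mono_set Set.Ioo_subset_Icc_self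

theorem integral_majorant_le {γ c : ℝ} (hγ : 1 < γ) (hc : 0 < c) (hc1 : c ≤ 1) :
    ∫ x, majorant γ c x ≤ 2 ^ (γ + 1) / (γ - 1) * c ^ (1 - γ) := by
  have hint : IntervalIntegrable (fun x : ℝ => x ^ (-γ)) volume c 1 :=
    intervalIntegral.intervalIntegrable_rpow (Or.inr (Set.notMem_uIcc_of_lt hc one_pos))
  have hint' : IntervalIntegrable (fun x : ℝ => (c + 1 - x) ^ (-γ)) volume c 1 := by
    simpa using (hint.comp_sub_left (c + 1)).symm
  have hI : ∫ x in c..1, x ^ (-γ) ≤ c ^ (1 - γ) / (γ - 1) := by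
    rw [integral_rpow (Or.inr ⟨by linarith, Set.notMem_uIcc_of_lt hc one_pos⟩), one_rpow,
      show -γ + 1 = 1 - γ by ring, ← neg_sub γ, div_neg, ← neg_div, neg_sub]
    gcongr
    exact sub_le_self _ zero_le_one
  rw [majorant, integral_indicator measurableSet_Ioo, ← integral_Ioc_eq_integral_Ioo,
    ← intervalIntegral.integral_of_le hc1, intervalIntegral.integral_const_mul,
    intervalIntegral.integral_add hint hint', intervalIntegral.integral_comp_sub_left
      (fun x => x ^ (-γ)), add_sub_cancel_right, add_sub_cancel_left, rpow_add two_pos, rpow_one]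
  calc 2 ^ γ * ((∫ x in c..1, x ^ (-γ)) + ∫ x in c..1, x ^ (-γ))
      ≤ 2 ^ γ * (c ^ (1 - γ) / (γ - 1) + c ^ (1 - γ) / (γ - 1)) := by gcongr
    _ = 2 ^ γ * 2 / (γ - 1) * c ^ (1 - γ) := by ring

theorem setIntegral_le_integral_pow_of_le_prod {ι E : Type*} [Fintype ι] [MeasureSpace E]
    [SigmaFinite (volume : Measure E)] {s : Set (ι → E)} {g : (ι → E) → ℝ} {F : E → ℝ}
    (hs : MeasurableSet s) (hg : ∀ x ∈ s, 0 ≤ g x) (hgF : ∀ x ∈ s, g x ≤ ∏ i, F (x i))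
    (hF : Integrable F) (hF0 : 0 ≤ F) :
    ∫ x in s, g x ≤ (∫ y, F y) ^ Fintype.card ι := by
  have hprod : Integrable fun x : ι → E => ∏ i, F (x i) := Integrable.fintype_prod fun _ => hF
  calc ∫ x in s, g x ≤ ∫ x in s, ∏ i, F (x i) :=
        integral_mono_of_nonneg ((ae_restrict_iff' hs).2 (.of_forall hg)) hprod.integrableOn
          ((ae_restrict_iff' hs).2 (.of_forall hgF))
    _ ≤ ∫ x : ι → E, ∏ i, F (x i) :=
        setIntegral_le_integral hprod (.of_forall fun x => Finset.prod_nonneg fun i _ => hF0 _)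
    _ = (∫ y, F y) ^ Fintype.card ι := integral_fintype_prod_volume_eq_pow F

theorem measurableSet_Dset (k : ℕ) (z : ℝ) : MeasurableSet (Dset k z) := by
  rw [Dset, Set.ofPred_and, Set.ofPred_forall]
  refine .inter (.iInter fun j => measurableSet_lt (measurable_pi_apply j) measurable_const) ?_
  exact measurableSet_lt measurable_const (Finset.measurable_sum _ fun j _ => measurable_pi_apply j)

theorem setIntegral_Dset_le {α z : ℝ} {n : ℕ} (hα : -1 < α) (hn : 2 ≤ n) (hc : 0 < z - n + 1) :
    ∫ t in Dset n z, (∏ j, t j) ^ (-α - 1) ≤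
      (∫ x, majorant ((α + n - 1) / n) (z - n + 1) x) ^ n := by
  have hsum : ∀ t ∈ Dset n z, z - n + 1 + Fintype.card (Fin n) - 1 < ∑ j, t j := by
    rintro t ⟨-, hz⟩
    rw [Fintype.card_fin]
    linarith
  have key := setIntegral_le_integral_pow_of_le_prod (g := fun t => (∏ j, t j) ^ (-α - 1))
    (measurableSet_Dset n z)
    (fun t ht => rpow_nonneg (Finset.prod_nonneg fun j _ =>
      (hc.trans (lt_of_add_card_sub_one_lt_sum ht.1 (hsum t ht) j)).le) _)
    (fun t ht => by
      simpa using rpow_prod_le_prod_majorant hα (by simpa using hn) hc.le ht.1 (hsum t ht))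
    (integrable_majorant hc) (majorant_nonneg hc.le)
  simpa using key

theorem W_of_ne_zero (α z : ℝ) {m : ℕ} (hm : m ≠ 0) :
    W α m z = α ^ m * ∫ t in Dset m z, (∏ j, t j) ^ (-α - 1) := by
  obtain ⟨k, rfl⟩ := Nat.exists_eq_succ_of_ne_zero hm
  rfl

/-- for `α > 2` and fixed `m ≥ 2`, `W_m(z) = O((z - m + 1)^{-α+1})` as
`z ↓ m - 1`: there exist `C > 0`, `δ > 0` with
`W_m(z) ≤ C (z - m + 1)^{1-α}` for all `z ∈ (m-1, m-1+δ)`. -/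
theorem stmt7 (α : ℝ) (hα : 2 < α) (m : ℕ) (hm : 2 ≤ m) :
    ∃ C > (0 : ℝ), ∃ δ > (0 : ℝ),
      ∀ z ∈ Set.Ioo ((m : ℝ) - 1) ((m : ℝ) - 1 + δ),
        W α m z ≤ C * (z - (m : ℝ) + 1) ^ (1 - α) := by
  have hm' : (2 : ℝ) ≤ m := by exact_mod_cast hm
  set γ : ℝ := (α + m - 1) / m
  have hγ : 1 < γ := by rw [lt_div_iff₀ (by linarith)]; linarith
  refine ⟨α ^ m * (2 ^ (γ + 1) / (γ - 1)) ^ m, by positivity, 1, one_pos, ?_⟩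
  rintro z ⟨hz0, hz1⟩
  have hc : 0 < z - m + 1 := by linarith
  have hexp : ((z - m + 1) ^ (1 - γ)) ^ m = (z - m + 1) ^ (1 - α) := by
    rw [← rpow_natCast, ← rpow_mul hc.le]
    have hγm : γ * m = α + m - 1 := div_mul_cancel₀ _ (by positivity)
    congr 1
    linear_combination -hγm
  calc W α m z = α ^ m * ∫ t in Dset m z, (∏ j, t j) ^ (-α - 1) := W_of_ne_zero α z (by omega)
    _ ≤ α ^ m * (∫ x, majorant γ (z - m + 1) x) ^ m := by
        gcongr
        exact setIntegral_Dset_le (by linarith) hm hc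
    _ ≤ α ^ m * (2 ^ (γ + 1) / (γ - 1) * (z - m + 1) ^ (1 - γ)) ^ m := by
        gcongr
        · exact integral_nonneg (majorant_nonneg hc.le)
        · exact integral_majorant_le hγ hc (by linarith)
    _ = α ^ m * (2 ^ (γ + 1) / (γ - 1)) ^ m * (z - m + 1) ^ (1 - α) := by
        rw [mul_pow, hexp, mul_assoc]
end

section
/- Let L be slowly varying and α > 2, V(t) = t^{-α}L(t). Suppose M_n ≫ n^{1/2}, L(M_n) = o(n^δ) for all δ > 0, and h_n ≥ n^{-(α-2)/(4α(k+1))} with L(h_n M_n) ∼ L(M_n). Then (n V(h_n M_n))^{k+1} = o((n V(M_n))^k) as n → ∞. -/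
open Filter Real

/-- let `L` be slowly varying, `α > 2`, `V(t) = t^{-α}L(t)`. If
`M_n ≫ n^{1/2}`, `L(M_n) = o(n^δ)` for all `δ > 0`, and
`h_n ≥ n^{-(α-2)/(4α(k+1))}` with `L(h_n M_n) ∼ L(M_n)`, then
`(n V(h_n M_n))^{k+1} = o((n V(M_n))^k)` as `n → ∞`. -/
theorem stmt16 (α : ℝ) (hα : 2 < α) (L : ℝ → ℝ) (hLpos : ∀ t > (0 : ℝ), 0 < L t)
    (hL : ∀ y > (0 : ℝ), Tendsto (fun t => L (t * y) / L t) atTop (nhds 1))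
    (V : ℝ → ℝ) (hV : ∀ t, V t = t ^ (-α) * L t)
    (k : ℕ) (hk : 1 ≤ k) (M h : ℕ → ℝ)
    (hM : Tendsto (fun n => M n / (n : ℝ) ^ ((1 : ℝ) / 2)) atTop atTop)
    (hLM : ∀ δ > (0 : ℝ), Tendsto (fun n => L (M n) / (n : ℝ) ^ δ) atTop (nhds 0))
    (hh : ∀ n, h n ∈ Set.Ioo (0 : ℝ) 1)
    (hhlow : ∀ n : ℕ, 1 ≤ n → (n : ℝ) ^ (-(α - 2) / (4 * α * (k + 1))) ≤ h n)
    (hLh : Tendsto (fun n => L (h n * M n) / L (M n)) atTop (nhds 1)) :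
    Tendsto (fun n : ℕ => ((n : ℝ) * V (h n * M n)) ^ (k + 1) / ((n : ℝ) * V (M n)) ^ k)
      atTop (nhds 0) := by
  have hαpos : (0:ℝ) < α := by linarith
  have hk1 : (0:ℝ) < (k:ℝ) + 1 := by positivity
  set e : ℝ := α * ((k:ℝ) + 1) with he
  have hepos : 0 < e := by positivity
  set c : ℝ := -(α - 2) / (4 * α * ((k:ℝ) + 1)) with hc
  have hce : (-c) * e = (α - 2) / 4 := by
    rw [hc, he]; field_simp
  -- eventual lower bound on M
  have hMlarge : ∀ᶠ n : ℕ in atTop, (n : ℝ) ^ ((1:ℝ)/2) ≤ M n := by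
    filter_upwards [hM.eventually_ge_atTop 1, eventually_ge_atTop 1] with n h1 hn1
    have hn0 : (0:ℝ) < (n:ℝ) := by exact_mod_cast hn1
    have hp : (0:ℝ) < (n:ℝ) ^ ((1:ℝ)/2) := rpow_pos_of_pos hn0 _
    exact (one_le_div hp).mp h1
  -- the auxiliary function tends to 0
  have haux : Tendsto
      (fun n : ℕ => (n:ℝ) * (h n) ^ (-e) * (M n) ^ (-α) * L (M n)) atTop (nhds 0) := by
    have hδ : (0:ℝ) < (α - 2) / 4 := by linarith
    have hupper := hLM ((α - 2) / 4) hδ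
    refine squeeze_zero' ?_ ?_ hupper
    · filter_upwards [hMlarge, eventually_ge_atTop 1] with n hMn hn1
      have hn0 : (0:ℝ) < (n:ℝ) := by exact_mod_cast hn1
      have hMpos : 0 < M n := lt_of_lt_of_le (rpow_pos_of_pos hn0 _) hMn
      have := hLpos (M n) hMpos
      have h1 : 0 < h n := (hh n).1
      positivity
    · filter_upwards [hMlarge, eventually_ge_atTop 1] with n hMn hn1
      have hn0 : (0:ℝ) < (n:ℝ) := by exact_mod_cast hn1
      have hMpos : 0 < M n := lt_of_lt_of_le (rpow_pos_of_pos hn0 _) hMn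
      have hLMpos : 0 < L (M n) := hLpos (M n) hMpos
      have hnc : (0:ℝ) < (n:ℝ) ^ c := rpow_pos_of_pos hn0 _
      -- h n ^ (-e) ≤ n ^ ((α-2)/4)
      have hb1 : (h n) ^ (-e) ≤ (n:ℝ) ^ ((α - 2) / 4) := by
        have := rpow_le_rpow_of_nonpos hnc (hhlow n hn1) (by linarith : -e ≤ 0)
        calc (h n) ^ (-e) ≤ ((n:ℝ) ^ c) ^ (-e) := this
          _ = (n:ℝ) ^ (c * (-e)) := by rw [← rpow_mul hn0.le]
          _ = (n:ℝ) ^ ((α - 2) / 4) := by rw [← hce]; ring_nf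
      -- M n ^ (-α) ≤ n ^ (-(α/2))
      have hb2 : (M n) ^ (-α) ≤ (n:ℝ) ^ (-(α/2)) := by
        have := rpow_le_rpow_of_nonpos (rpow_pos_of_pos hn0 ((1:ℝ)/2)) hMn
          (by linarith : -α ≤ 0)
        calc (M n) ^ (-α) ≤ ((n:ℝ) ^ ((1:ℝ)/2)) ^ (-α) := this
          _ = (n:ℝ) ^ (((1:ℝ)/2) * (-α)) := by rw [← rpow_mul hn0.le]
          _ = (n:ℝ) ^ (-(α/2)) := by ring_nf
      have hbig : (n:ℝ) * (h n) ^ (-e) * (M n) ^ (-α) * L (M n)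
          ≤ (n:ℝ) * (n:ℝ) ^ ((α - 2) / 4) * (n:ℝ) ^ (-(α/2)) * L (M n) := by
        have h1 : 0 < h n := (hh n).1
        have hhe : 0 ≤ (h n) ^ (-e) := (rpow_pos_of_pos h1 _).le
        have hMa : 0 ≤ (M n) ^ (-α) := (rpow_pos_of_pos hMpos _).le
        have hna : 0 ≤ (n:ℝ) ^ (-(α/2)) := (rpow_pos_of_pos hn0 _).le
        gcongr
      refine hbig.trans (le_of_eq ?_)
      have : (n:ℝ) * (n:ℝ) ^ ((α - 2) / 4) * (n:ℝ) ^ (-(α/2))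
          = (n:ℝ) ^ (1 + (α - 2) / 4 + -(α/2)) := by
        rw [rpow_add hn0, rpow_add hn0, rpow_one]
      rw [this]
      have h14 : 1 + (α - 2) / 4 + -(α/2) = -((α - 2)/4) := by ring
      rw [h14, rpow_neg hn0.le]
      field_simp
  have hratio : Tendsto (fun n : ℕ => (L (h n * M n) / L (M n)) ^ (k + 1)) atTop (nhds 1) := by
    simpa using hLh.pow (k + 1)
  have hg : Tendsto
      (fun n : ℕ => (n:ℝ) * (h n) ^ (-e) * (M n) ^ (-α) * L (M n)
        * (L (h n * M n) / L (M n)) ^ (k + 1)) atTop (nhds 0) := by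
    simpa using haux.mul hratio
  refine hg.congr' ?_
  filter_upwards [hMlarge, eventually_ge_atTop 1] with n hMn hn1
  have hn0 : (0:ℝ) < (n:ℝ) := by exact_mod_cast hn1
  have hMpos : 0 < M n := lt_of_lt_of_le (rpow_pos_of_pos hn0 _) hMn
  have hHpos : 0 < h n := (hh n).1
  have hxpos : 0 < h n * M n := mul_pos hHpos hMpos
  have hLx : 0 < L (h n * M n) := hLpos _ hxpos
  have hLm : 0 < L (M n) := hLpos _ hMpos
  have hMa : 0 < (M n) ^ (-α) := rpow_pos_of_pos hMpos _
  rw [hV, hV]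
  have hxsplit : (h n * M n) ^ (-α) = (h n) ^ (-α) * (M n) ^ (-α) :=
    Real.mul_rpow hHpos.le hMpos.le
  have hH : ((h n) ^ (-α)) ^ (k + 1) = (h n) ^ (-e) := by
    rw [← Real.rpow_natCast ((h n) ^ (-α)) (k+1), ← Real.rpow_mul hHpos.le]
    congr 1
    push_cast [he]
    ring
  rw [hxsplit]
  rw [show ((n:ℝ) * ((h n) ^ (-α) * (M n) ^ (-α) * L (h n * M n))) ^ (k+1)
      = (n:ℝ)^(k+1) * ((h n) ^ (-α))^(k+1) * ((M n) ^ (-α))^(k+1)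
        * (L (h n * M n))^(k+1) by ring]
  rw [hH]
  rw [show ((n:ℝ) * ((M n) ^ (-α) * L (M n))) ^ k
      = (n:ℝ)^k * ((M n) ^ (-α))^k * (L (M n))^k by ring]
  rw [pow_succ ((M n) ^ (-α)) k, pow_succ (n:ℝ) k, div_pow]
  field_simp
  ring
end
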